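/- Let n ≥ 10, let N = M₁·M₂·M₃·M₄·M₂·M₄·M₁·M₂·M₃, and let v ∈ ℝⁿ be the vector whose 2nd coordinate is 0 and whose every other coordinate is 1/(n−1). Then w = N·v has all coordinates strictly positive and coordinates summing to 1, and w lies in the convex hull of the columns of N. Hence the open standard simplex (the interior of the first facet of the unfolded chain) intersects the convex hull of the columns of N (the tenth facet of the chain), so this ten-facet chain unfolding of the n-orthoplex overlaps itself; in particular the n-orthoplex is not all-net for n ≥ 10. -/

import Mathlib

/-- The reflection matrix `M_a` (0-indexed): the identity except that the `a`-th column has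
`-1` in the `a`-th entry and `2/(n-1)` in every other entry. -/
noncomputable def reflMat (n : ℕ) (a : Fin n) : Matrix (Fin n) (Fin n) ℝ :=
  fun i j => if j = a then (if i = a then -1 else 2 / ((n : ℝ) - 1)) else if i = j then 1 else 0

lemma reflMat_mulVec (n : ℕ) (a : Fin n) (x : Fin n → ℝ) :
    (reflMat n a).mulVec x = fun i => if i = a then -x a else x i + (2/((n:ℝ)-1)) * x a := by
  funext i
  simp only [Matrix.mulVec, dotProduct, reflMat]
  by_cases hia : i = a
  · subst hia
    rw [Finset.sum_congr rfl (g := fun j => if j = i then -x j else 0) ?_, Finset.sum_ite_eq']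
    · simp
    · intro j _
      by_cases hj : j = i
      · simp [hj]
      · simp [hj, Ne.symm hj]
  · rw [Finset.sum_congr rfl (g := fun j => (if j = a then (2/((n:ℝ)-1)) * x j else 0)
      + (if j = i then x j else 0)) ?_, Finset.sum_add_distrib,
      Finset.sum_ite_eq', Finset.sum_ite_eq']
    · simp [hia]; ring
    · intro j _
      by_cases hj : j = a
      · subst hj
        simp [hia, Ne.symm hia]
      · by_cases hji : j = i
        · subst hji; simp [hj, hia]
        · simp [hj, hji, Ne.symm hji]

lemma sum_reflMat_mulVec (n : ℕ) (hn : 2 ≤ n) (a : Fin n) (x : Fin n → ℝ) :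
    ∑ i, (reflMat n a).mulVec x i = ∑ i, x i := by
  have hne : ((n : ℝ) - 1) ≠ 0 := by
    have : (2:ℝ) ≤ n := by exact_mod_cast hn
    linarith
  rw [reflMat_mulVec]
  rw [Finset.sum_congr rfl (g := fun i => (x i + (2/((n:ℝ)-1)) * x a)
      + (if i = a then (-x a - (x a + (2/((n:ℝ)-1)) * x a)) else 0)) ?_,
    Finset.sum_add_distrib, Finset.sum_add_distrib, Finset.sum_ite_eq', Finset.sum_const,
    Finset.card_univ, Fintype.card_fin]
  · simp only [Finset.mem_univ, if_true, nsmul_eq_mul]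
    have : (n : ℝ) * (2 / ((n:ℝ)-1) * x a) = 2 * x a + 2/((n:ℝ)-1) * x a := by
      field_simp; ring
    rw [this]; ring
  · intro j _
    by_cases hj : j = a <;> simp [hj]

/-- Tracking vector: entries at indices 0,1,2,3 are `a,b,c,d`; all other entries are `t`. -/
noncomputable def svec (n : ℕ) (a b c d t : ℝ) : Fin n → ℝ :=
  fun i => if (i:ℕ) = 0 then a else if (i:ℕ) = 1 then b else if (i:ℕ) = 2 then c
    else if (i:ℕ) = 3 then d else t

lemma svec_step0 (n : ℕ) (hn : 9 < n) (a b c d t : ℝ) :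
    (reflMat n ⟨0, by omega⟩).mulVec (svec n a b c d t) =
      svec n (-a) (b + 2/((n:ℝ)-1)*a) (c + 2/((n:ℝ)-1)*a) (d + 2/((n:ℝ)-1)*a)
        (t + 2/((n:ℝ)-1)*a) := by
  rw [reflMat_mulVec]
  funext i
  have h : svec n a b c d t ⟨0, by omega⟩ = a := by simp [svec]
  rw [h]
  simp only [svec, Fin.ext_iff]
  split_ifs <;> first | omega | ring

lemma svec_step1 (n : ℕ) (hn : 9 < n) (a b c d t : ℝ) :
    (reflMat n ⟨1, by omega⟩).mulVec (svec n a b c d t) =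
      svec n (a + 2/((n:ℝ)-1)*b) (-b) (c + 2/((n:ℝ)-1)*b) (d + 2/((n:ℝ)-1)*b)
        (t + 2/((n:ℝ)-1)*b) := by
  rw [reflMat_mulVec]
  funext i
  have h : svec n a b c d t ⟨1, by omega⟩ = b := by simp [svec]
  rw [h]
  simp only [svec, Fin.ext_iff]
  split_ifs <;> first | omega | ring

lemma svec_step2 (n : ℕ) (hn : 9 < n) (a b c d t : ℝ) :
    (reflMat n ⟨2, by omega⟩).mulVec (svec n a b c d t) =
      svec n (a + 2/((n:ℝ)-1)*c) (b + 2/((n:ℝ)-1)*c) (-c) (d + 2/((n:ℝ)-1)*c)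
        (t + 2/((n:ℝ)-1)*c) := by
  rw [reflMat_mulVec]
  funext i
  have h : svec n a b c d t ⟨2, by omega⟩ = c := by simp [svec]
  rw [h]
  simp only [svec, Fin.ext_iff]
  split_ifs <;> first | omega | ring

lemma svec_step3 (n : ℕ) (hn : 9 < n) (a b c d t : ℝ) :
    (reflMat n ⟨3, by omega⟩).mulVec (svec n a b c d t) =
      svec n (a + 2/((n:ℝ)-1)*d) (b + 2/((n:ℝ)-1)*d) (c + 2/((n:ℝ)-1)*d) (-d)
        (t + 2/((n:ℝ)-1)*d) := by
  rw [reflMat_mulVec]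
  funext i
  have h : svec n a b c d t ⟨3, by omega⟩ = d := by simp [svec]
  rw [h]
  simp only [svec, Fin.ext_iff]
  split_ifs <;> first | omega | ring

section polys

lemma powchain (s : ℝ) (hs : 0 < s) (h9 : s ≤ 1/9) (k : ℕ) :
    s^(k+1) ≤ s^k * (1/9) := by
  have : s^(k+1) = s^k * s := by ring
  rw [this]
  exact mul_le_mul_of_nonneg_left h9 (le_of_lt (pow_pos hs k))

lemma E0pos (s : ℝ) (hs : 0 < s) (h9 : s ≤ 1/9) :
    0 < s + 4*s^2 + 8*s^3 - 24*s^4 - 160*s^5 - 512*s^6 - 896*s^7 - 768*s^8 - 256*s^9 := by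
  have h2 := powchain s hs h9 1
  have h3 := powchain s hs h9 2
  have h4 := powchain s hs h9 3
  have h5 := powchain s hs h9 4
  have h6 := powchain s hs h9 5
  have h7 := powchain s hs h9 6
  have h8 := powchain s hs h9 7
  have h9' := powchain s hs h9 8
  have p1 : 0 < s^1 := pow_pos hs 1
  have p2 : 0 < s^2 := pow_pos hs 2
  have p3 : 0 < s^3 := pow_pos hs 3
  have hss : s = s^1 := by ring
  nlinarith [p1, p2, p3]

lemma E1pos (s : ℝ) (hs : 0 < s) (h9 : s ≤ 1/9) :
    0 < 4*s^2 + 8*s^3 - 8*s^4 - 48*s^5 + 32*s^6 + 704*s^7 + 1664*s^8 + 1536*s^9 + 512*s^10 := by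
  have h3 := powchain s hs h9 2
  have h4 := powchain s hs h9 3
  have h5 := powchain s hs h9 4
  have p2 : 0 < s^2 := pow_pos hs 2
  have p6 : 0 < s^6 := pow_pos hs 6
  have p7 : 0 < s^7 := pow_pos hs 7
  have p8 : 0 < s^8 := pow_pos hs 8
  have p9 : 0 < s^9 := pow_pos hs 9
  have p10 : 0 < s^10 := pow_pos hs 10
  nlinarith

lemma E2pos (s : ℝ) (hs : 0 < s) (h9 : s ≤ 1/9) :
    0 < s - 4*s^2 - 32*s^3 - 88*s^4 - 64*s^5 + 384*s^6 + 1536*s^7 + 2432*s^8 + 1792*s^9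
      + 512*s^10 := by
  have h2 := powchain s hs h9 1
  have h3 := powchain s hs h9 2
  have h4 := powchain s hs h9 3
  have h5 := powchain s hs h9 4
  have p6 : 0 < s^6 := pow_pos hs 6
  have p7 : 0 < s^7 := pow_pos hs 7
  have p8 : 0 < s^8 := pow_pos hs 8
  have p9 : 0 < s^9 := pow_pos hs 9
  have p10 : 0 < s^10 := pow_pos hs 10
  nlinarith [pow_pos hs 1, pow_pos hs 2, pow_pos hs 3, pow_pos hs 4, pow_pos hs 5]

lemma E3pos (s : ℝ) (hs : 0 < s) (h9 : s ≤ 1/9) :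
    0 < s - 12*s^3 - 40*s^4 + 64*s^5 + 672*s^6 + 1856*s^7 + 2560*s^8 + 1792*s^9 + 512*s^10 := by
  have h2 := powchain s hs h9 1
  have h3 := powchain s hs h9 2
  have h4 := powchain s hs h9 3
  have p5 : 0 < s^5 := pow_pos hs 5
  have p6 : 0 < s^6 := pow_pos hs 6
  have p7 : 0 < s^7 := pow_pos hs 7
  have p8 : 0 < s^8 := pow_pos hs 8
  have p9 : 0 < s^9 := pow_pos hs 9
  have p10 : 0 < s^10 := pow_pos hs 10
  nlinarith [pow_pos hs 1, pow_pos hs 2, pow_pos hs 3, pow_pos hs 4]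

lemma Etpos (s : ℝ) (hs : 0 < s) (h9 : s ≤ 1/9) :
    0 < s - 4*s^3 + 16*s^4 + 208*s^5 + 832*s^6 + 1920*s^7 + 2560*s^8 + 1792*s^9 + 512*s^10 := by
  have h2 := powchain s hs h9 1
  have h3 := powchain s hs h9 2
  have p4 : 0 < s^4 := pow_pos hs 4
  have p5 : 0 < s^5 := pow_pos hs 5
  have p6 : 0 < s^6 := pow_pos hs 6
  have p7 : 0 < s^7 := pow_pos hs 7
  have p8 : 0 < s^8 := pow_pos hs 8
  have p9 : 0 < s^9 := pow_pos hs 9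
  have p10 : 0 < s^10 := pow_pos hs 10
  nlinarith [pow_pos hs 1, pow_pos hs 2, pow_pos hs 3]

end polys
/-- For `n ≥ 10`, with `N = M₁M₂M₃M₄M₂M₄M₁M₂M₃` (product over the list `⟨1,2,3,4,2,4,1,2,3⟩`,
written 0-indexed) and `v` the ridge midpoint (2nd coordinate `0`, others `1/(n-1)`),
the point `w = N·v` has all coordinates strictly positive and summing to `1`, lies in the
convex hull of the columns of `N`, and hence the open standard simplex intersects the
convex hull of the columns of `N`: the ten-facet chain unfolding of the `n`-orthoplex
overlaps itself. -/
theorem orthoplex_not_all_net_of_ge_ten (n : ℕ) (hn : 10 ≤ n)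
    (N : Matrix (Fin n) (Fin n) ℝ)
    (hN : N = (([⟨0, by omega⟩, ⟨1, by omega⟩, ⟨2, by omega⟩, ⟨3, by omega⟩, ⟨1, by omega⟩,
        ⟨3, by omega⟩, ⟨0, by omega⟩, ⟨1, by omega⟩, ⟨2, by omega⟩] : List (Fin n)).map
        (reflMat n)).prod)
    (v : Fin n → ℝ)
    (hv : v = fun j : Fin n => if (j : ℕ) = 1 then 0 else 1 / ((n : ℝ) - 1)) :
    (∀ i : Fin n, 0 < N.mulVec v i) ∧ (∑ i, N.mulVec v i = 1) ∧
    (∃ c : Fin n → ℝ, (∀ i, 0 ≤ c i) ∧ (∑ i, c i = 1) ∧ N.mulVec v = N.mulVec c) ∧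
    ({x : Fin n → ℝ | (∀ i, 0 < x i) ∧ ∑ i, x i = 1} ∩
      {x : Fin n → ℝ | ∃ c : Fin n → ℝ, (∀ i, 0 ≤ c i) ∧ (∑ i, c i = 1) ∧
        x = N.mulVec c}).Nonempty := by
  have hn2 : 2 ≤ n := by omega
  have h10 : (10:ℝ) ≤ (n:ℝ) := by exact_mod_cast hn
  have hpos : 0 < (n:ℝ) - 1 := by linarith
  have hne : ((n:ℝ) - 1) ≠ 0 := ne_of_gt hpos
  set s : ℝ := 1/((n:ℝ)-1) with hsdef
  have hs : 0 < s := by rw [hsdef]; exact one_div_pos.mpr hpos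
  have h9 : s ≤ 1/9 := by
    rw [hsdef]
    exact one_div_le_one_div_of_le (by norm_num) (by linarith)
  have hv' : v = svec n s 0 s s s := by
    rw [hv]; funext i; simp only [svec]
    split_ifs <;> first | omega | rfl
  have h2s : (2:ℝ)/((n:ℝ)-1) = 2*s := by rw [hsdef]; ring
  have hNv : N.mulVec v = svec n
      (s + 4*s^2 + 8*s^3 - 24*s^4 - 160*s^5 - 512*s^6 - 896*s^7 - 768*s^8 - 256*s^9)
      (4*s^2 + 8*s^3 - 8*s^4 - 48*s^5 + 32*s^6 + 704*s^7 + 1664*s^8 + 1536*s^9 + 512*s^10)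
      (s - 4*s^2 - 32*s^3 - 88*s^4 - 64*s^5 + 384*s^6 + 1536*s^7 + 2432*s^8 + 1792*s^9 + 512*s^10)
      (s - 12*s^3 - 40*s^4 + 64*s^5 + 672*s^6 + 1856*s^7 + 2560*s^8 + 1792*s^9 + 512*s^10)
      (s - 4*s^3 + 16*s^4 + 208*s^5 + 832*s^6 + 1920*s^7 + 2560*s^8 + 1792*s^9 + 512*s^10) := by
    rw [hN, hv']
    simp only [List.map_cons, List.map_nil, List.prod_cons, List.prod_nil, mul_one,
      ← Matrix.mulVec_mulVec]
    rw [svec_step2 n hn, svec_step1 n hn, svec_step0 n hn, svec_step3 n hn, svec_step1 n hn,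
      svec_step3 n hn, svec_step2 n hn, svec_step1 n hn, svec_step0 n hn, h2s]
    funext i
    simp only [svec]
    split_ifs <;> ring
  have hposall : ∀ i : Fin n, 0 < N.mulVec v i := by
    intro i
    rw [hNv]
    simp only [svec]
    split_ifs
    · exact E0pos s hs h9
    · exact E1pos s hs h9
    · exact E2pos s hs h9
    · exact E3pos s hs h9
    · exact Etpos s hs h9
  have hsumv : ∑ i, v i = 1 := by
    rw [hv']
    rw [Finset.sum_congr rfl (g := fun i : Fin n =>
      s - (if i = (⟨1, by omega⟩ : Fin n) then s else 0)) ?_, Finset.sum_sub_distrib,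
      Finset.sum_const, Finset.sum_ite_eq', Finset.card_univ, Fintype.card_fin]
    · simp only [Finset.mem_univ, if_true, nsmul_eq_mul]
      rw [hsdef]
      field_simp
    · intro j _
      simp only [svec, Fin.ext_iff]
      split_ifs <;> first | omega | ring
  have hsum : ∑ i, N.mulVec v i = 1 := by
    rw [hN]
    simp only [List.map_cons, List.map_nil, List.prod_cons, List.prod_nil, mul_one,
      ← Matrix.mulVec_mulVec]
    rw [sum_reflMat_mulVec n hn2, sum_reflMat_mulVec n hn2, sum_reflMat_mulVec n hn2,
      sum_reflMat_mulVec n hn2, sum_reflMat_mulVec n hn2, sum_reflMat_mulVec n hn2,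
      sum_reflMat_mulVec n hn2, sum_reflMat_mulVec n hn2, sum_reflMat_mulVec n hn2]
    exact hsumv
  have hvnn : ∀ i, 0 ≤ v i := by
    intro i
    rw [hv]
    dsimp only
    split_ifs
    · exact le_rfl
    · exact hs.le
  refine ⟨hposall, hsum, ⟨v, hvnn, hsumv, rfl⟩, ⟨N.mulVec v, ⟨hposall, hsum⟩, v, hvnn, hsumv, rfl⟩⟩
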